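/- If an m-linear form U on (ℝⁿ)^m (sup norms) has at most 4^{m−1} nonzero monomial coefficients, then (∑_{j₁,…,j_m}|U(e_{j₁},…,e_{j_m})|^{2m/(m+1)})^{(m+1)/(2m)} ≤ 2^{1−1/m} ‖U‖, and the constant 2^{1−1/m} is attained (e.g., by the recursively defined forms S_m with 4^{m−1} unimodular monomials and ‖S_m‖ = 2^{m−1}). -/

import Mathlib

/-!
Write `c_j` for the coefficients of `U`. Averaging `U²` over all `±1`-vectors gives
`∑ c_j² ≤ ‖U‖²`, since distinct monomials are orthogonal for this average; Hölder's inequality on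
the at most `4^(m-1)` nonzero coefficients turns this into the bound, with constant
`(4^(m-1))^(1/(2m)) = 2^(1-1/m)`.

For sharpness, index the coordinates of `ℓ∞^(2^k)` by `Fin k → Bool` and unroll the recursion
`S_{k+1}(x₀, …, x_k) = (y₀ + y₁) S_k(x₀⁰, …, x_{k-1}⁰) + (y₀ - y₁) S_k(x₀¹, …, x_{k-1}¹)`, where
`y = x_k`, `y_β` is its coordinate at `(0, …, 0, β)` and `xᵝ` is the half of `x` whose last index
bit is `β`. This gives `4^k` monomials with coefficients `±1`, so `‖S_{k+1}‖ ≥ 2^k` by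
`∑ c_j² ≤ ‖U‖²`, while `|a + b| + |a - b| ≤ 2 max |a| |b|` at each step of the recursion gives
`‖S_{k+1}‖ ≤ 2^k`.
-/

noncomputable def stdBasis (n : ℕ) (i : Fin n) : PiLp ⊤ (fun _ : Fin n => ℝ) :=
  (WithLp.equiv ⊤ (∀ _ : Fin n, ℝ)).symm (Pi.single i 1)

open Finset Function

noncomputable section

section Coefficients

variable {m n : ℕ} (U : ContinuousMultilinearMap ℝ (fun _ : Fin m => PiLp ⊤ fun _ : Fin n => ℝ) ℝ)

def coeff (j : Fin m → Fin n) : ℝ := U fun s => stdBasis n (j s)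

lemma stdBasis_eq_basisFun (i : Fin n) : stdBasis n i = PiLp.basisFun ⊤ ℝ (Fin n) i := by
  simp [stdBasis]

lemma apply_eq_sum_coeff (x : Fin m → PiLp ⊤ fun _ : Fin n => ℝ) :
    U x = ∑ j : Fin m → Fin n, (∏ s, x s (j s)) * coeff U j := by
  have hx : x = fun s => ∑ u, x s u • stdBasis n u := funext fun s => by
    simp_rw [stdBasis_eq_basisFun]
    exact ((PiLp.basisFun ⊤ ℝ (Fin n)).sum_repr (x s)).symm
  conv_lhs => rw [hx, U.map_sum]
  simp [ContinuousMultilinearMap.map_smul_univ, coeff]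

end Coefficients

section Rademacher

def boolSign (β : Bool) : ℝ := if β then -1 else 1

lemma abs_boolSign (β : Bool) : |boolSign β| = 1 := by
  cases β <;> simp [boolSign]

lemma sum_boolSign_mul_boolSign {ι : Type*} [Fintype ι] [DecidableEq ι] (a b : ι) :
    ∑ g : ι → Bool, boolSign (g a) * boolSign (g b) = if a = b then 2 ^ Fintype.card ι else 0 := by
  split_ifs with hab
  · subst hab
    have hsq : ∀ β, boolSign β * boolSign β = 1 := fun β => by cases β <;> simp [boolSign]
    simp [hsq]
  · set flip : (ι → Bool) → (ι → Bool) := fun g => update g a (!g a)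
    have hflip : Involutive flip := fun g => by ext t; by_cases t = a <;> simp_all [flip]
    have hneg (g : ι → Bool) :
        boolSign (flip g a) * boolSign (flip g b) = -(boolSign (g a) * boolSign (g b)) := by
      cases ha : g a <;> cases hb : g b <;>
        simp [flip, boolSign, update_of_ne (Ne.symm hab), ha, hb]
    have := Equiv.sum_comp hflip.toPerm fun g => boolSign (g a) * boolSign (g b)
    simp only [Involutive.coe_toPerm, hneg, sum_neg_distrib] at this
    linarith

lemma sum_prod_boolSign_mul_boolSign {m n : ℕ} (j j' : Fin m → Fin n) :
    ∑ ε : Fin m → Fin n → Bool, ∏ s, boolSign (ε s (j s)) * boolSign (ε s (j' s)) =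
      if j = j' then ((2 : ℝ) ^ n) ^ m else 0 := by
  simp_rw [← Fintype.prod_sum fun s (g : Fin n → Bool) => boolSign (g (j s)) * boolSign (g (j' s)),
    sum_boolSign_mul_boolSign, Fintype.card_fin, prod_ite_zero, funext_iff]
  simp

def signVec {n : ℕ} (g : Fin n → Bool) : PiLp ⊤ fun _ : Fin n => ℝ :=
  WithLp.toLp ⊤ fun u => boolSign (g u)

lemma norm_signVec_le_one {n : ℕ} (g : Fin n → Bool) : ‖signVec g‖ ≤ 1 := by
  simp [signVec, pi_norm_le_iff_of_nonneg, abs_boolSign]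

variable {m n : ℕ} (U : ContinuousMultilinearMap ℝ (fun _ : Fin m => PiLp ⊤ fun _ : Fin n => ℝ) ℝ)

lemma sum_sq_apply_signVec :
    ∑ ε : Fin m → Fin n → Bool, U (fun s => signVec (ε s)) ^ 2 =
      ((2 : ℝ) ^ n) ^ m * ∑ j, coeff U j ^ 2 := by
  calc ∑ ε : Fin m → Fin n → Bool, U (fun s => signVec (ε s)) ^ 2
      = ∑ j, ∑ j', coeff U j * coeff U j' *
          ∑ ε : Fin m → Fin n → Bool, ∏ s, boolSign (ε s (j s)) * boolSign (ε s (j' s)) := by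
        simp_rw [apply_eq_sum_coeff U, sq, sum_mul_sum, mul_sum]
        rw [sum_comm]
        refine sum_congr rfl fun j _ => ?_
        rw [sum_comm]
        refine sum_congr rfl fun j' _ => sum_congr rfl fun ε _ => ?_
        simp only [signVec, prod_mul_distrib]
        ring
    _ = ((2 : ℝ) ^ n) ^ m * ∑ j, coeff U j ^ 2 := by
        simp [sum_prod_boolSign_mul_boolSign, mul_sum, sq, mul_comm]

theorem sum_sq_coeff_le_sq_norm : ∑ j, coeff U j ^ 2 ≤ ‖U‖ ^ 2 := by
  have hle : ∀ ε : Fin m → Fin n → Bool, U (fun s => signVec (ε s)) ^ 2 ≤ ‖U‖ ^ 2 := fun ε => by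
    rw [← sq_abs, ← Real.norm_eq_abs]
    gcongr
    simpa using U.le_opNorm_mul_prod_of_le fun s => norm_signVec_le_one (ε s)
  have hsum := sum_le_sum fun ε (_ : ε ∈ univ) => hle ε
  rw [sum_sq_apply_signVec, sum_const, card_univ, Fintype.card_fun, Fintype.card_fun] at hsum
  simp only [Fintype.card_bool, Fintype.card_fin, nsmul_eq_mul, Nat.cast_pow, Nat.cast_ofNat]
    at hsum
  exact le_of_mul_le_mul_left hsum (by positivity)

end Rademacher

lemma rpow_sum_abs_rpow_le_card_rpow_mul_sum_sq {ι : Type*} (s : Finset ι) (f : ι → ℝ) {p : ℝ}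
    (hp : 0 < p) (hp₂ : p ≤ 2) :
    (∑ i ∈ s, |f i| ^ p) ^ (2 / p) ≤ (#s : ℝ) ^ (2 / p - 1) * ∑ i ∈ s, f i ^ 2 := by
  have h := Real.rpow_sum_le_const_mul_sum_rpow_of_nonneg s (f := fun i => |f i| ^ p)
    ((one_le_div hp).2 hp₂) fun i _ => by positivity
  convert h using 3 with i
  rw [← Real.rpow_mul (abs_nonneg _), mul_div_cancel₀ _ hp.ne', Real.rpow_two, sq_abs]

lemma two_rpow_one_sub_inv_sq {m : ℕ} (hm : 1 ≤ m) :
    ((2 : ℝ) ^ (1 - 1 / (m : ℝ))) ^ 2 = ((4 : ℝ) ^ (m - 1)) ^ (1 / (m : ℝ)) := by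
  have h4 : (4 : ℝ) ^ (m - 1) = 2 ^ (2 * ((m : ℝ) - 1)) := by
    rw [Real.rpow_mul zero_le_two, ← Nat.cast_pred hm, Real.rpow_natCast]; norm_num
  have hm0 : (m : ℝ) ≠ 0 := by positivity
  rw [h4, ← Real.rpow_mul zero_le_two, ← Real.rpow_mul_natCast zero_le_two]
  congr 1
  field_simp
  push_cast
  ring

lemma four_pow_rpow_eq {m : ℕ} (hm : 1 ≤ m) :
    ((4 : ℝ) ^ (m - 1)) ^ ((m + 1 : ℝ) / (2 * m)) = 2 ^ (1 - 1 / (m : ℝ)) * 2 ^ (m - 1) := by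
  have hm0 : (m : ℝ) ≠ 0 := by positivity
  refine (pow_left_inj₀ (by positivity) (by positivity) two_ne_zero).1 ?_
  rw [mul_pow, two_rpow_one_sub_inv_sq hm, ← pow_mul, mul_comm (m - 1), pow_mul,
    ← Real.rpow_mul_natCast (by positivity),
    show (m + 1 : ℝ) / (2 * m) * (2 : ℕ) = 1 / m + 1 by field_simp; push_cast; ring,
    Real.rpow_add_one (by positivity)]
  norm_num

section UpperBound

variable {m n : ℕ} (U : ContinuousMultilinearMap ℝ (fun _ : Fin m => PiLp ⊤ fun _ : Fin n => ℝ) ℝ)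

theorem rpow_sum_abs_coeff_le (hm : 1 ≤ m) (hU : #{j | coeff U j ≠ 0} ≤ 4 ^ (m - 1)) :
    (∑ j, |coeff U j| ^ ((2 * m : ℝ) / (m + 1))) ^ ((m + 1 : ℝ) / (2 * m))
      ≤ (2 : ℝ) ^ ((1 : ℝ) - 1 / m) * ‖U‖ := by
  set p : ℝ := 2 * m / (m + 1) with hp_def
  have hm0 : (0 : ℝ) < m := by exact_mod_cast hm
  have hp : 0 < p := by positivity
  have hp₂ : p ≤ 2 := by rw [div_le_iff₀ (by positivity)]; linarith
  have hsupp : ∑ j ∈ {j | coeff U j ≠ 0}, |coeff U j| ^ p = ∑ j, |coeff U j| ^ p :=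
    sum_filter_of_ne fun j _ h hj => h (by simp [hj, Real.zero_rpow hp.ne'])
  have hHolder := rpow_sum_abs_rpow_le_card_rpow_mul_sum_sq {j | coeff U j ≠ 0} (coeff U) hp hp₂
  have h2p : 2 / p = (m + 1 : ℝ) / (2 * m) * 2 := by rw [hp_def]; field_simp
  have h2p1 : 2 / p - 1 = 1 / m := by rw [hp_def]; field_simp; ring
  rw [hsupp, h2p1, h2p, Real.rpow_mul (by positivity)] at hHolder
  refine (pow_le_pow_iff_left₀ (by positivity) (by positivity) two_ne_zero).1 ?_
  calc _ ≤ (#{j | coeff U j ≠ 0} : ℝ) ^ (1 / (m : ℝ)) *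
        ∑ j ∈ {j | coeff U j ≠ 0}, coeff U j ^ 2 := by
        simpa [Real.rpow_two] using hHolder
    _ ≤ ((4 : ℝ) ^ (m - 1)) ^ (1 / (m : ℝ)) * ‖U‖ ^ 2 := by
        gcongr
        · exact_mod_cast hU
        · exact (sum_le_sum_of_subset_of_nonneg (subset_univ _) fun j _ _ => sq_nonneg _).trans
            (sum_sq_coeff_le_sq_norm U)
    _ = _ := by rw [mul_pow, two_rpow_one_sub_inv_sq hm]

end UpperBound

section Monomials

variable {m n : ℕ}

def monomial (j : Fin m → Fin n) :
    ContinuousMultilinearMap ℝ (fun _ : Fin m => PiLp ⊤ fun _ : Fin n => ℝ) ℝ :=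
  (ContinuousMultilinearMap.mkPiAlgebra ℝ (Fin m) ℝ).compContinuousLinearMap
    fun s => PiLp.proj ⊤ (fun _ : Fin n => ℝ) (j s)

lemma monomial_apply (j : Fin m → Fin n) (x : Fin m → PiLp ⊤ fun _ : Fin n => ℝ) :
    monomial j x = ∏ s, x s (j s) := by
  simp [monomial]

lemma coeff_monomial (j j' : Fin m → Fin n) : coeff (monomial j) j' = if j = j' then 1 else 0 := by
  simp [coeff, monomial_apply, stdBasis_eq_basisFun, prod_boole, funext_iff]

variable {Q : Type*} [Fintype Q]

def ofMonomials (Φ : Q → Fin m → Fin n) (ε : Q → ℝ) :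
    ContinuousMultilinearMap ℝ (fun _ : Fin m => PiLp ⊤ fun _ : Fin n => ℝ) ℝ :=
  ∑ q, ε q • monomial (Φ q)

variable {Φ : Q → Fin m → Fin n} (ε : Q → ℝ)

lemma ofMonomials_apply (x : Fin m → PiLp ⊤ fun _ : Fin n => ℝ) :
    ofMonomials Φ ε x = ∑ q, ε q * ∏ s, x s (Φ q s) := by
  simp [ofMonomials, monomial_apply]

lemma coeff_ofMonomials_apply (j : Fin m → Fin n) :
    coeff (ofMonomials Φ ε) j = ∑ q, if Φ q = j then ε q else 0 := by
  have hmon (q : Q) := coeff_monomial (Φ q) j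
  simp only [coeff] at hmon ⊢
  simp [ofMonomials, hmon]

lemma coeff_ofMonomials (hΦ : Injective Φ) (q : Q) : coeff (ofMonomials Φ ε) (Φ q) = ε q := by
  rw [coeff_ofMonomials_apply, sum_eq_single q (fun q' _ h => if_neg (hΦ.ne h)) (by simp),
    if_pos rfl]

lemma coeff_ofMonomials_of_notMem_range {j : Fin m → Fin n} (hj : j ∉ Set.range Φ) :
    coeff (ofMonomials Φ ε) j = 0 := by
  rw [coeff_ofMonomials_apply]
  exact sum_eq_zero fun q _ => if_neg fun h => hj ⟨q, h⟩

lemma sum_comp_coeff_ofMonomials (hΦ : Injective Φ) (F : ℝ → ℝ) (hF : F 0 = 0) :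
    ∑ j, F (coeff (ofMonomials Φ ε) j) = ∑ q, F (ε q) := by
  classical
  rw [← sum_subset (subset_univ (univ.image Φ)) fun j _ hj => ?_, sum_image hΦ.injOn]
  · simp [coeff_ofMonomials ε hΦ]
  · rw [coeff_ofMonomials_of_notMem_range ε (by simpa using hj), hF]

lemma card_coeff_ofMonomials_ne_zero (hΦ : Injective Φ) (hε : ∀ q, ε q ≠ 0) :
    #{j | coeff (ofMonomials Φ ε) j ≠ 0} = Fintype.card Q := by
  classical
  have : ({j | coeff (ofMonomials Φ ε) j ≠ 0} : Finset (Fin m → Fin n)) = univ.image Φ := by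
    ext j
    by_cases hj : j ∈ Set.range Φ
    · obtain ⟨q, rfl⟩ := hj
      simp [coeff_ofMonomials ε hΦ, hε, hΦ.eq_iff]
    · simpa [coeff_ofMonomials_of_notMem_range ε hj] using hj
  rw [this, card_image_of_injective _ hΦ, card_univ]

end Monomials

section ExtremalForm

lemma abs_add_add_abs_sub_le_two_mul {a b c : ℝ} (ha : |a| ≤ c) (hb : |b| ≤ c) :
    |a + b| + |a - b| ≤ 2 * c := by
  rw [abs_le] at ha hb
  rcases abs_cases (a + b) with ⟨h₁, -⟩ | ⟨h₁, -⟩ <;>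
    rcases abs_cases (a - b) with ⟨h₂, -⟩ | ⟨h₂, -⟩ <;> linarith

/-- Summing out the coordinates lowest first, each one costs a factor `2 M i`. -/
theorem sum_prod_le_two_pow_mul_prod {k : ℕ} (G : Fin k → (Fin k → Bool) → ℝ) (M : Fin k → ℝ)
    (hG : ∀ i b, 0 ≤ G i b) (hlow : ∀ i b t β, t < i → G i (update b t β) = G i b)
    (hpair : ∀ i b, G i (update b i false) + G i (update b i true) ≤ 2 * M i) :
    ∑ b, ∏ i, G i b ≤ 2 ^ k * ∏ i, M i := by
  induction k with
  | zero => simp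
  | succ k ih =>
    set G' : Fin k → (Fin k → Bool) → ℝ := fun i b => G i.succ (Fin.cons false b)
    have hG' : ∑ b, ∏ i, G' i b ≤ 2 ^ k * ∏ i : Fin k, M i.succ := by
      refine ih G' _ (fun i b => hG _ _) (fun i b t β ht => ?_) fun i b => ?_
      · simp only [G']
        rw [Fin.cons_update]
        exact hlow _ _ _ _ (Fin.succ_lt_succ_iff.2 ht)
      · simpa only [G', Fin.cons_update] using hpair i.succ (Fin.cons false b)
    have hsplit : ∑ b : Fin (k + 1) → Bool, ∏ i, G i b
        = ∑ b : Fin k → Bool, (∑ β, G 0 (update (Fin.cons false b) 0 β)) * ∏ i, G' i b := by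
      rw [← (Fin.consEquiv fun _ => Bool).sum_comp, Fintype.sum_prod_type, sum_comm]
      refine sum_congr rfl fun b _ => ?_
      rw [sum_mul]
      refine sum_congr rfl fun β _ => ?_
      have hcons : Fin.consEquiv (fun _ => Bool) (β, b) = update (Fin.cons false b) 0 β := by
        rw [Fin.update_cons_zero]; rfl
      rw [hcons, Fin.prod_univ_succ]
      exact congrArg _ (prod_congr rfl fun i _ => hlow _ _ _ _ (Fin.succ_pos i))
    have hM0 : 0 ≤ M 0 := by
      linarith [hpair 0 default, hG 0 (update default 0 false), hG 0 (update default 0 true)]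
    calc ∑ b : Fin (k + 1) → Bool, ∏ i, G i b
        ≤ ∑ b : Fin k → Bool, 2 * M 0 * ∏ i, G' i b := by
          rw [hsplit]
          refine sum_le_sum fun b _ => mul_le_mul_of_nonneg_right ?_ (prod_nonneg fun i _ => hG _ _)
          rw [Fintype.sum_bool, add_comm]
          exact hpair 0 (Fin.cons false b)
      _ ≤ 2 * M 0 * (2 ^ k * ∏ i : Fin k, M i.succ) := by rw [← mul_sum]; gcongr
      _ = 2 ^ (k + 1) * ∏ i, M i := by rw [Fin.prod_univ_succ]; ring

variable (k : ℕ)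

def boolCubeEquivFin : (Fin k → Bool) ≃ Fin (2 ^ k) := Fintype.equivFinOfCardEq (by simp)

variable {k}

def tailIndex (i : Fin k) (b : Fin k → Bool) (β : Bool) : Fin k → Bool :=
  fun t => if t < i then false else update b i β t

lemma tailIndex_self (i : Fin k) (b : Fin k → Bool) (β : Bool) : tailIndex i b β i = β := by
  simp [tailIndex]

lemma tailIndex_update_of_le {i t : Fin k} (hti : t ≤ i) (b : Fin k → Bool) (γ β : Bool) :
    tailIndex i (update b t γ) β = tailIndex i b β := by
  ext u
  by_cases hu : u < i
  · simp [tailIndex, hu]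
  · rcases eq_or_ne u i with rfl | hui
    · simp [tailIndex]
    · have hut : u ≠ t := by rintro rfl; exact hui (le_antisymm hti (not_lt.1 hu))
      simp [tailIndex, hu, update_of_ne hui, update_of_ne hut]

def extremalIndex (q : (Fin k → Bool) × (Fin k → Bool)) : Fin (k + 1) → Fin (2 ^ k) :=
  Fin.cons (boolCubeEquivFin k q.1) fun i => boolCubeEquivFin k (tailIndex i q.1 (q.2 i))

def extremalSign (q : (Fin k → Bool) × (Fin k → Bool)) : ℝ := ∏ i, boolSign (q.1 i && q.2 i)

variable (k) in
def extremalForm :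
    ContinuousMultilinearMap ℝ (fun _ : Fin (k + 1) => PiLp ⊤ fun _ : Fin (2 ^ k) => ℝ) ℝ :=
  ofMonomials extremalIndex extremalSign

lemma extremalIndex_injective : Injective (extremalIndex (k := k)) := by
  intro q q' h
  have h0 : q.1 = q'.1 := (boolCubeEquivFin k).injective (congrFun h 0)
  refine Prod.ext h0 (funext fun i => ?_)
  have hi := (boolCubeEquivFin k).injective (congrFun h i.succ)
  simpa [extremalIndex, h0, tailIndex_self] using congrFun hi i

lemma abs_extremalSign (q : (Fin k → Bool) × (Fin k → Bool)) : |extremalSign q| = 1 := by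
  simp [extremalSign, abs_prod, abs_boolSign]

lemma extremalForm_apply (x : Fin (k + 1) → PiLp ⊤ fun _ : Fin (2 ^ k) => ℝ) :
    extremalForm k x = ∑ b, x 0 (boolCubeEquivFin k b) * ∏ i : Fin k,
      ∑ β, boolSign (b i && β) * x i.succ (boolCubeEquivFin k (tailIndex i b β)) := by
  rw [extremalForm, ofMonomials_apply, Fintype.sum_prod_type]
  refine sum_congr rfl fun b _ => ?_
  rw [Fintype.prod_sum, mul_sum]
  refine sum_congr rfl fun b' _ => ?_
  simp [extremalIndex, extremalSign, Fin.prod_univ_succ, prod_mul_distrib]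
  ring

lemma norm_extremalForm_le : ‖extremalForm k‖ ≤ 2 ^ k := by
  refine ContinuousMultilinearMap.opNorm_le_bound (by positivity) fun x => ?_
  set e := boolCubeEquivFin k
  set G : Fin k → (Fin k → Bool) → ℝ := fun i b =>
    |∑ β, boolSign (b i && β) * x i.succ (e (tailIndex i b β))|
  have hlow : ∀ i b t β, t < i → G i (update b t β) = G i b := fun i b t β ht => by
    simp only [G, tailIndex_update_of_le ht.le, update_of_ne ht.ne']
  have hpair : ∀ i b, G i (update b i false) + G i (update b i true) ≤ 2 * ‖x i.succ‖ := by
    intro i b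
    simp only [G, tailIndex_update_of_le le_rfl, update_self, Fintype.sum_bool, boolSign]
    simpa [← sub_eq_add_neg, add_comm] using
      abs_add_add_abs_sub_le_two_mul (PiLp.norm_apply_le (x i.succ) (e (tailIndex i b false)))
        (PiLp.norm_apply_le (x i.succ) (e (tailIndex i b true)))
  calc ‖extremalForm k x‖ ≤ ∑ b, ‖x 0‖ * ∏ i, G i b := by
        rw [extremalForm_apply, Real.norm_eq_abs]
        refine (abs_sum_le_sum_abs _ _).trans (sum_le_sum fun b _ => ?_)
        rw [abs_mul, abs_prod]
        gcongr
        exact PiLp.norm_apply_le (x 0) _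
    _ ≤ ‖x 0‖ * (2 ^ k * ∏ i : Fin k, ‖x i.succ‖) := by
        rw [← mul_sum]
        gcongr
        exact sum_prod_le_two_pow_mul_prod G _ (fun i b => abs_nonneg _) hlow hpair
    _ = 2 ^ k * ∏ s, ‖x s‖ := by rw [Fin.prod_univ_succ]; ring

lemma sum_abs_coeff_extremalForm_rpow {p : ℝ} (hp : p ≠ 0) :
    ∑ j, |coeff (extremalForm k) j| ^ p = 4 ^ k := by
  rw [extremalForm, sum_comp_coeff_ofMonomials _ extremalIndex_injective (fun c => |c| ^ p)
    (by simp [Real.zero_rpow hp])]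
  simp [abs_extremalSign, ← mul_pow]

lemma card_coeff_extremalForm_ne_zero : #{j | coeff (extremalForm k) j ≠ 0} = 4 ^ k := by
  rw [extremalForm, card_coeff_ofMonomials_ne_zero _ extremalIndex_injective fun q h => by
    simpa [h] using abs_extremalSign q]
  simp [← mul_pow]

lemma norm_extremalForm : ‖extremalForm k‖ = 2 ^ k := by
  refine le_antisymm norm_extremalForm_le ?_
  have hsq : ∑ j, coeff (extremalForm k) j ^ 2 = 4 ^ k := by
    simpa [Real.rpow_two] using sum_abs_coeff_extremalForm_rpow (k := k) two_ne_zero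
  have h := hsq ▸ sum_sq_coeff_le_sq_norm (extremalForm k)
  refine (pow_le_pow_iff_left₀ (by positivity) (norm_nonneg _) two_ne_zero).1 ?_
  rw [← pow_mul, mul_comm, pow_mul]
  norm_num [h]

end ExtremalForm

end

/-- If an `m`-linear form `U` on `(ℝⁿ)^m` (sup norms) has at most `4^{m−1}` nonzero
monomial coefficients, then the Bohnenblust–Hille sum satisfies
`(∑|U|^{2m/(m+1)})^{(m+1)/(2m)} ≤ 2^{1−1/m} ‖U‖`; moreover the constant
`2^{1−1/m}` is attained by a nonzero form with exactly `4^{m−1}` monomials. -/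
theorem stmt17 (m : ℕ) (hm : 1 ≤ m) :
    (∀ (n : ℕ)
      (U : ContinuousMultilinearMap ℝ (fun _ : Fin m => PiLp ⊤ fun _ : Fin n => ℝ) ℝ),
      (Finset.univ.filter
          (fun j : Fin m → Fin n => U (fun s => stdBasis n (j s)) ≠ 0)).card ≤ 4 ^ (m - 1) →
      (∑ j : Fin m → Fin n,
          |U (fun s => stdBasis n (j s))| ^ ((2 * m : ℝ) / (m + 1))) ^ ((m + 1 : ℝ) / (2 * m))
        ≤ (2 : ℝ) ^ ((1 : ℝ) - 1 / m) * ‖U‖)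
    ∧ (∃ (n : ℕ)
        (U : ContinuousMultilinearMap ℝ (fun _ : Fin m => PiLp ⊤ fun _ : Fin n => ℝ) ℝ),
        U ≠ 0 ∧
        (Finset.univ.filter
            (fun j : Fin m → Fin n => U (fun s => stdBasis n (j s)) ≠ 0)).card = 4 ^ (m - 1) ∧
        (∑ j : Fin m → Fin n,
            |U (fun s => stdBasis n (j s))| ^ ((2 * m : ℝ) / (m + 1))) ^ ((m + 1 : ℝ) / (2 * m))
          = (2 : ℝ) ^ ((1 : ℝ) - 1 / m) * ‖U‖) := by
  refine ⟨fun n U hU => rpow_sum_abs_coeff_le U hm hU, ?_⟩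
  obtain ⟨k, rfl⟩ : ∃ k, m = k + 1 := ⟨m - 1, by omega⟩
  refine ⟨2 ^ k, extremalForm k, fun h => ?_, card_coeff_extremalForm_ne_zero, ?_⟩
  · have h0 := norm_extremalForm (k := k)
    rw [h, norm_zero] at h0
    exact absurd h0.symm (by positivity)
  · change (∑ j, |coeff (extremalForm k) j| ^ _) ^ _ = _
    rw [sum_abs_coeff_extremalForm_rpow (by positivity), norm_extremalForm]
    simpa using four_pow_rpow_eq hm
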